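/- Let Γ: A = ⊕_{t∈T} A^{(t)} be a grading of an F-algebra A by a set T with finite support, and regard A as an algebra with the generalized F^T-action h·a = h(t)a for a ∈ A^{(t)}. Then for all n ∈ ℕ: c_n^{T-gr}(A) = c_n^{F^T}(A), the n-th graded cocharacter equals the n-th F^T-cocharacter (the FS_n-modules W_n^{T-gr}/(W_n^{T-gr} ∩ Id^{T-gr}(A)) and W_n^{F^T}/(W_n^{F^T} ∩ Id^{F^T}(A)) are isomorphic), and, if char F = 0, ℓ_n^{T-gr}(A) = ℓ_n^{F^T}(A). -/

import Mathlib

open Filter Finset Submodule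

noncomputable section

namespace PIExp

/-- The multiset of leaves (occurrences of generators) of a non-associative word. -/
def mleaves {α : Type} : FreeMagma α → Multiset α
  | .of a => {a}
  | .mul x y => mleaves x + mleaves y

variable (F : Type) [Field F] (S : Type)

/-- The absolutely free non-associative algebra on `X = {x_1, x_2, …}`
with symbols from `S` (the generator `(i, s)` plays the role of `x_i^s`). -/
abbrev FreeNA : Type := FreeNonUnitalNonAssocAlgebra F (ℕ × S)

/-- A non-associative word in the generators, viewed inside the free algebra. -/
def embedMonomial : FreeMagma (ℕ × S) →ₙ* FreeNA F S :=
  FreeMagma.lift (FreeNonUnitalNonAssocAlgebra.of F)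

/-- `Wn F S n` is the space of multilinear elements of degree `n` in `x_0, …, x_{n-1}`:
the span of all words `x_{σ(0)}^{s_0} ⋯ x_{σ(n-1)}^{s_{n-1}}` (all bracket arrangements). -/
def Wn (n : ℕ) : Submodule F (FreeNA F S) :=
  Submodule.span F
    {f | ∃ w : FreeMagma (ℕ × S), (mleaves w).map Prod.fst = Multiset.range n ∧
      f = embedMonomial F S w}

/-- The substitution `x_i ↦ x_{g i}` (with the symbols untouched),
as an algebra endomorphism of the free algebra. -/
def relabelHom (g : ℕ → ℕ) : FreeNA F S →ₙₐ[F] FreeNA F S :=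
  FreeNonUnitalNonAssocAlgebra.lift F
    (fun p : ℕ × S => FreeNonUnitalNonAssocAlgebra.of F (g p.1, p.2))

/-- `relabelHom` as a linear endomorphism. -/
def relabelL (g : ℕ → ℕ) : FreeNA F S →ₗ[F] FreeNA F S where
  toFun := relabelHom F S g
  map_add' := map_add _
  map_smul' := map_smul _

variable {A : Type} [NonUnitalNonAssocSemiring A] [Module F A]
  [SMulCommClass F A A] [IsScalarTower F A A]

variable (A) in
/-- The ideal of polynomial `H`-identities of an algebra `A` with a generalized `H`-action:
all elements of the free algebra vanishing under every substitution `x_i^h ↦ h • ψ i`. -/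
def IdH (H : Type) [Semiring H] [Module H A] : Submodule F (FreeNA F H) :=
  ⨅ ψ : ℕ → A,
    LinearMap.ker ((FreeNonUnitalNonAssocAlgebra.lift F (fun p : ℕ × H => p.2 • ψ p.1) :
      FreeNA F H →ₙₐ[F] A) : FreeNA F H →ₗ[F] A)

variable (A) in
/-- The ideal of graded polynomial identities of a `T`-graded algebra
`A = ⊕_t comp t`: elements vanishing under all graded substitutions `x_i^{(t)} ↦ ψ (i,t) ∈ comp t`. -/
def IdGr (T : Type) (comp : T → Submodule F A) : Submodule F (FreeNA F T) :=
  ⨅ ψ : {ψ : ℕ × T → A // ∀ p, ψ p ∈ comp p.2},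
    LinearMap.ker ((FreeNonUnitalNonAssocAlgebra.lift F (fun p : ℕ × T => ψ.1 p) :
      FreeNA F T →ₙₐ[F] A) : FreeNA F T →ₗ[F] A)

variable (A) in
/-- The ideal of ordinary polynomial identities of `A` (the symbols are trivial). -/
def IdOrd : Submodule F (FreeNA F Unit) :=
  ⨅ ψ : ℕ → A,
    LinearMap.ker ((FreeNonUnitalNonAssocAlgebra.lift F (fun p : ℕ × Unit => ψ p.1) :
      FreeNA F Unit →ₙₐ[F] A) : FreeNA F Unit →ₗ[F] A)

/-- The `n`-th codimension attached to an ideal of identities `I`: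
`dim (W_n / (W_n ∩ I))`, computed as the image of `W_n` in the quotient by `I`. -/
def codim (I : Submodule F (FreeNA F S)) (n : ℕ) : ℕ :=
  Module.finrank F ((Wn F S n).map I.mkQ)

/-- The `n`-th codimension as a cardinal (for possibly infinite-dimensional situations). -/
def codimRank (I : Submodule F (FreeNA F S)) (n : ℕ) : Cardinal :=
  Module.rank F ((Wn F S n).map I.mkQ)

end PIExp
namespace PIExp

/-- The parts of a partition `p ⊢ n`, listed in non-increasing order:
`partFn p 0 = λ_1`, `partFn p 1 = λ_2`, … (`0` beyond the number of parts). -/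
def partFn {n : ℕ} (p : Nat.Partition n) : ℕ → ℕ :=
  fun i => ((p.parts.sort (· ≤ ·)).reverse).getD i 0

/-- The cell (row, column) of the `k`-th box (0-indexed) in the canonical
row-by-row filling of the Young diagram with row lengths `lam`. -/
def cellOf (lam : ℕ → ℕ) : ℕ → ℕ × ℕ
  | 0 => (0, 0)
  | k + 1 =>
      let c := cellOf lam k
      if c.2 + 1 < lam c.1 then (c.1, c.2 + 1) else (c.1 + 1, 0)

/-- The canonical Young tableau of shape `p`: the cell of each of the numbers `0, …, n-1`. -/
def canonT {n : ℕ} (p : Nat.Partition n) : Fin n → ℕ × ℕ :=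
  fun m => cellOf (partFn p) (m : ℕ)

/-- A permutation of `Fin n` viewed as a map `ℕ → ℕ`. -/
def permNat {n : ℕ} (σ : Equiv.Perm (Fin n)) : ℕ → ℕ :=
  fun i => if h : i < n then (σ ⟨i, h⟩ : ℕ) else i

/-- The row stabilizer `R_{T}` of a tableau `T` (given by the cell of each number). -/
def rowStab {n : ℕ} (Tb : Fin n → ℕ × ℕ) : Finset (Equiv.Perm (Fin n)) :=
  Finset.univ.filter fun π => ∀ m, (Tb (π m)).1 = (Tb m).1

/-- The column stabilizer `C_{T}` of a tableau `T`. -/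
def colStab {n : ℕ} (Tb : Fin n → ℕ × ℕ) : Finset (Equiv.Perm (Fin n)) :=
  Finset.univ.filter fun π => ∀ m, (Tb (π m)).2 = (Tb m).2

variable (F : Type) [Field F] (S : Type)

/-- The Young symmetrizer `e_T = a_T b_T = Σ_{π ∈ R_T} Σ_{σ ∈ C_T} (sign σ) πσ`, acting on the
free algebra by permutation of the variables. -/
def youngE {n : ℕ} (Tb : Fin n → ℕ × ℕ) : FreeNA F S →ₗ[F] FreeNA F S :=
  ∑ π ∈ rowStab Tb, ∑ σ ∈ colStab Tb,
    ((Equiv.Perm.sign σ : ℤ) : F) • relabelL F S (permNat (π * σ))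

/-- The Young symmetrizer `e*_T = b_T a_T = Σ_{σ ∈ C_T} Σ_{π ∈ R_T} (sign σ) σπ`. -/
def youngEStar {n : ℕ} (Tb : Fin n → ℕ × ℕ) : FreeNA F S →ₗ[F] FreeNA F S :=
  ∑ σ ∈ colStab Tb, ∑ π ∈ rowStab Tb,
    ((Equiv.Perm.sign σ : ℤ) : F) • relabelL F S (permNat (σ * π))

/-- The multiplicity `m(A, H, λ)` of the irreducible `S_n`-character `χ(λ)` in the `n`-th
cocharacter attached to the ideal of identities `I`; it equals
`dim e_{T_λ}·(W_n/(W_n ∩ I))`, computed here via the canonical tableau of shape `λ`. -/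
def mult (I : Submodule F (FreeNA F S)) {n : ℕ} (p : Nat.Partition n) : ℕ :=
  Module.finrank F (((Wn F S n).map (youngE F S (canonT p))).map I.mkQ)

/-- The `n`-th colength `ℓ_n = Σ_{λ ⊢ n} m(A, H, λ)` attached to an ideal of identities `I`. -/
def colength (I : Submodule F (FreeNA F S)) (n : ℕ) : ℕ :=
  ∑ p : Nat.Partition n, mult F S I p

/-- The function `Φ(x_1, …, x_s) = 1 / (x_1^{x_1} ⋯ x_s^{x_s})` (with `0^0 = 1`). -/
def Phi (s : ℕ) (x : Fin s → ℝ) : ℝ :=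
  (∏ i, Real.rpow (x i) (x i))⁻¹

/-- `max { Φ(λ_1/n, …, λ_s/n) : λ ⊢ n, m(A,H,λ) ≠ 0 }`. -/
def maxPhi (s : ℕ) (I : Submodule F (FreeNA F S)) (n : ℕ) : ℝ :=
  sSup {r : ℝ | ∃ p : Nat.Partition n, mult F S I p ≠ 0 ∧
    r = Phi s (fun i => (partFn p (i : ℕ) : ℝ) / (n : ℝ))}

/-- `d(A) = limsup_n max { Φ(λ_1/n, …, λ_s/n) : λ ⊢ n, m(A,H,λ) ≠ 0 }`. -/
def dVal (s : ℕ) (I : Submodule F (FreeNA F S)) : ℝ :=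
  Filter.limsup (fun n : ℕ => maxPhi F S s I n) Filter.atTop

end PIExp
namespace PIExp

/-- `A` is an algebra with a generalized `H`-action: for every `h ∈ H` there exist
`h'_i, h''_i, h'''_i, h''''_i ∈ H` with
`h(ab) = Σ_i ((h'_i a)(h''_i b) + (h'''_i b)(h''''_i a))` for all `a, b ∈ A`. -/
def IsGenAction (H A : Type) [Semiring H] [NonUnitalNonAssocSemiring A] [Module H A] : Prop :=
  ∀ h : H, ∃ (k : ℕ) (h₁ h₂ h₃ h₄ : Fin k → H), ∀ a b : A,
    h • (a * b) = ∑ i : Fin k, ((h₁ i • a) * (h₂ i • b) + (h₃ i • b) * (h₄ i • a))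

/-- `A` is `H`-simple: `A² ≠ 0` and `A` has no `H`-invariant two-sided ideals
other than `0` and `A`. -/
def IsHSimple (F H A : Type) [Field F] [Semiring H] [NonUnitalNonAssocSemiring A]
    [Module F A] [Module H A] : Prop :=
  (∃ a b : A, a * b ≠ 0) ∧
    ∀ I : Submodule F A,
      (∀ a : A, ∀ x ∈ I, a * x ∈ I) → (∀ a : A, ∀ x ∈ I, x * a ∈ I) →
      (∀ h : H, ∀ x ∈ I, h • x ∈ I) → I = ⊥ ∨ I = ⊤

/-- `comp : T → Submodule F A` is a grading of `A` by the set `T`: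
`A = ⊕_{t ∈ T} A^{(t)}` and for all `s, t` there is `r` with `A^{(s)} A^{(t)} ⊆ A^{(r)}`. -/
def IsGrading (F T A : Type) [Field F] [NonUnitalNonAssocSemiring A] [Module F A]
    (comp : T → Submodule F A) : Prop :=
  iSupIndep comp ∧ (⨆ t, comp t) = ⊤ ∧
    ∀ s t : T, ∃ r : T, ∀ a ∈ comp s, ∀ b ∈ comp t, a * b ∈ comp r

/-- A graded algebra is graded-simple: `A² ≠ 0` and the only graded two-sided ideals
are `0` and `A`. -/
def IsGradedSimple (F T A : Type) [Field F] [NonUnitalNonAssocSemiring A] [Module F A]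
    (comp : T → Submodule F A) : Prop :=
  (∃ a b : A, a * b ≠ 0) ∧
    ∀ I : Submodule F A,
      (∀ a : A, ∀ x ∈ I, a * x ∈ I) → (∀ a : A, ∀ x ∈ I, x * a ∈ I) →
      (I = ⨆ t, I ⊓ comp t) → I = ⊥ ∨ I = ⊤

end PIExp

/-!
The comparison map `ξ : x_i^h ↦ ∑_{t ∈ supp Γ} h(t) x_i^{(t)}` turns a polynomial with symbols
from `F^T` into a graded polynomial. Since `h • a = h(t) a` on `A^{(t)}`, evaluating `ξ f` at a
graded substitution `x_i^{(t)} ↦ a_i^{(t)}` is the same as evaluating `f` at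
`x_i ↦ ∑_t a_i^{(t)}`, and every substitution `x_i ↦ a_i` arises this way by decomposing the
`a_i` into homogeneous components; hence `Id^{F^T}(A) = ξ⁻¹(Id^{T-gr}(A))`. Conversely every
multilinear graded monomial is either a graded identity (a variable of degree outside the
support) or the image of the monomial whose symbols are the indicator functions of the degrees.
So `ξ` induces an isomorphism of the quotients of `W_n`, and since `ξ` commutes with the
permutations of the variables it also matches their images under the Young symmetrizers.
-/

namespace Submodule

section Semiring

variable {R M ι : Type*} [Semiring R] [AddCommMonoid M] [Module R M]

theorem exists_sum_eq_of_iSup_eq_top {p : ι → Submodule R M} {s : Finset ι}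
    (htotal : (⨆ t, p t) = ⊤) (hs : ∀ t ∉ s, p t = ⊥) (a : M) :
    ∃ c : ι → M, (∀ t, c t ∈ p t) ∧ ∑ t ∈ s, c t = a := by
  have hle : (⨆ t, p t) ≤ ⨆ t ∈ s, p t := iSup_le fun t => by
    by_cases ht : t ∈ s
    · exact le_biSup p ht
    · rw [hs t ht]
      exact bot_le
  obtain ⟨μ, hμ⟩ := (mem_iSup_finset_iff_exists_sum p a).mp (hle (htotal ▸ mem_top))
  exact ⟨fun t => μ t, fun t => (μ t).2, hμ⟩

end Semiring

variable {R M N : Type*} [Ring R] [AddCommGroup M] [Module R M] [AddCommGroup N] [Module R N]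

theorem finrank_map_mkQ_eq_of_map_sup_eq (ξ : M →ₗ[R] N) {I : Submodule R M}
    {J : Submodule R N} (hI : I = J.comap ξ) {P : Submodule R M} {Q : Submodule R N}
    (hPQ : P.map ξ ⊔ J = Q ⊔ J) :
    Module.finrank R (P.map I.mkQ) = Module.finrank R (Q.map J.mkQ) := by
  have hker : I = LinearMap.ker (J.mkQ ∘ₗ ξ) := by
    rw [LinearMap.ker_comp, ker_mkQ, hI]
  set φ := I.liftQ (J.mkQ ∘ₗ ξ) hker.le
  have hφ : Function.Injective φ := LinearMap.ker_eq_bot.mp (ker_liftQ_eq_bot' _ _ hker)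
  have himage : (P.map I.mkQ).map φ = Q.map J.mkQ := by
    rw [← map_comp, liftQ_mkQ, map_comp, ← sup_bot_eq (map J.mkQ (map ξ P)), ← mkQ_map_self J,
      ← map_sup, hPQ, map_sup, mkQ_map_self, sup_bot_eq]
  rw [← himage]
  exact (equivMapOfInjective φ hφ _).finrank_eq

theorem map_sup_eq_of_comp_eq (ξ : M →ₗ[R] N) {J : Submodule R N} {P : Submodule R M}
    {Q : Submodule R N} (hPQ : P.map ξ ⊔ J = Q ⊔ J) {eM : M →ₗ[R] M} {eN : N →ₗ[R] N}
    (hcomm : ξ ∘ₗ eM = eN ∘ₗ ξ) (hJ : J.map eN ≤ J) :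
    (P.map eM).map ξ ⊔ J = Q.map eN ⊔ J := by
  calc (P.map eM).map ξ ⊔ J = (P.map ξ ⊔ J).map eN ⊔ J := by
        rw [← map_comp, hcomm, map_comp, map_sup, sup_assoc, sup_eq_right.mpr hJ]
    _ = Q.map eN ⊔ J := by
        rw [hPQ, map_sup, sup_assoc, sup_eq_right.mpr hJ]

end Submodule

namespace PIExp

open FreeNonUnitalNonAssocAlgebra

@[simp]
lemma mleaves_mul {α : Type} (x y : FreeMagma α) :
    mleaves (x * y) = mleaves x + mleaves y := rfl

lemma mleaves_map {α β : Type} (f : α → β) : ∀ w : FreeMagma α,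
    mleaves (FreeMagma.map f w) = (mleaves w).map f
  | .of _ => rfl
  | .mul x y => by
      rw [FreeMagma.mul_eq, map_mul, mleaves_mul, mleaves_mul, mleaves_map f x,
        mleaves_map f y, Multiset.map_add]

lemma map_eq_zero_of_mem_mleaves {α M : Type} [MulZeroClass M] (f : FreeMagma α →ₙ* M)
    {p : α} (hp : f (.of p) = 0) : ∀ {w : FreeMagma α}, p ∈ mleaves w → f w = 0
  | .of _, h => by rwa [Multiset.mem_singleton.mp h] at hp
  | .mul x y, h => by
      rw [FreeMagma.mul_eq, map_mul]
      rcases Multiset.mem_add.mp h with hx | hy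
      · rw [map_eq_zero_of_mem_mleaves f hp hx, zero_mul]
      · rw [map_eq_zero_of_mem_mleaves f hp hy, mul_zero]

variable {F : Type} [Field F] {S : Type}

@[simp]
lemma embedMonomial_of (a : ℕ × S) : embedMonomial F S (.of a) = of F a := rfl

variable (F S) in
def wordSpan (m : Multiset ℕ) : Submodule F (FreeNA F S) :=
  span F {f | ∃ w : FreeMagma (ℕ × S), (mleaves w).map Prod.fst = m ∧ f = embedMonomial F S w}

lemma mul_mem_wordSpan {m₁ m₂ : Multiset ℕ} {x y : FreeNA F S} (hx : x ∈ wordSpan F S m₁)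
    (hy : y ∈ wordSpan F S m₂) : x * y ∈ wordSpan F S (m₁ + m₂) := by
  have hxy := apply_mem_map₂ (LinearMap.mul F (FreeNA F S)) hx hy
  rw [wordSpan, wordSpan, map₂_span_span] at hxy
  refine span_le.mpr ?_ hxy
  rintro _ ⟨_, ⟨u, rfl, rfl⟩, _, ⟨v, rfl, rfl⟩, rfl⟩
  exact subset_span ⟨u * v, by simp, (map_mul _ _ _).symm⟩

lemma relabelL_apply (g : ℕ → ℕ) (x : FreeNA F S) :
    relabelL F S g x = relabelHom F S g x := rfl

section Young

variable {S' : Type}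

lemma youngE_comp_of_forall_relabelL_comp (ξ : FreeNA F S →ₗ[F] FreeNA F S')
    (h : ∀ g, relabelL F S' g ∘ₗ ξ = ξ ∘ₗ relabelL F S g) {n : ℕ} (Tb : Fin n → ℕ × ℕ) :
    youngE F S' Tb ∘ₗ ξ = ξ ∘ₗ youngE F S Tb := by
  have h' : ∀ g x, relabelL F S' g (ξ x) = ξ (relabelL F S g x) :=
    fun g => LinearMap.congr_fun (h g)
  ext x
  simp only [youngE, LinearMap.comp_apply, LinearMap.sum_apply, LinearMap.smul_apply, map_sum,
    map_smul, h']

lemma map_youngE_le_of_forall_map_relabelL_le {P : Submodule F (FreeNA F S)}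
    (h : ∀ g, P.map (relabelL F S g) ≤ P) {n : ℕ} (Tb : Fin n → ℕ × ℕ) :
    P.map (youngE F S Tb) ≤ P := by
  rw [Submodule.map_le_iff_le_comap]
  intro x hx
  simp only [youngE, Submodule.mem_comap, LinearMap.sum_apply, LinearMap.smul_apply]
  exact sum_mem fun π _ => sum_mem fun σ _ => P.smul_mem _ (h _ (mem_map_of_mem hx))

end Young

section Comparison

variable {T : Type} (s : Finset T)

variable (F) in
def toGraded : FreeNA F (T → F) →ₙₐ[F] FreeNA F T :=
  lift F fun p : ℕ × (T → F) => ∑ t ∈ s, p.2 t • of F (p.1, t)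

abbrev toGradedₗ : FreeNA F (T → F) →ₗ[F] FreeNA F T := toGraded F s

lemma toGraded_of (i : ℕ) (h : T → F) :
    toGraded F s (of F (i, h)) = ∑ t ∈ s, h t • of F (i, t) :=
  lift_of_apply F _ (i, h)

lemma relabelL_comp_toGradedₗ (g : ℕ → ℕ) :
    relabelL F T g ∘ₗ toGradedₗ s = toGradedₗ s ∘ₗ relabelL F (T → F) g := by
  have : (relabelHom F T g).comp (toGraded F s) =
      (toGraded F s).comp (relabelHom F (T → F) g) :=
    hom_ext F fun ⟨i, h⟩ => by simp [relabelHom, toGraded]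
  exact LinearMap.ext fun x => DFunLike.congr_fun this x

lemma toGraded_embedMonomial_mem_wordSpan : ∀ w : FreeMagma (ℕ × (T → F)),
    toGraded F s (embedMonomial F (T → F) w) ∈ wordSpan F T ((mleaves w).map Prod.fst)
  | .of a => by
      rw [embedMonomial_of, toGraded_of]
      exact sum_mem fun t _ => smul_mem _ _ (subset_span ⟨.of (a.1, t), rfl, rfl⟩)
  | .mul x y => by
      rw [FreeMagma.mul_eq, map_mul, map_mul, mleaves_mul, Multiset.map_add]
      exact mul_mem_wordSpan (toGraded_embedMonomial_mem_wordSpan x)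
        (toGraded_embedMonomial_mem_wordSpan y)

lemma map_toGradedₗ_wordSpan_le (m : Multiset ℕ) :
    (wordSpan F (T → F) m).map (toGradedₗ s) ≤ wordSpan F T m := by
  rw [wordSpan, map_span, span_le]
  rintro _ ⟨_, ⟨w, rfl, rfl⟩, rfl⟩
  exact toGraded_embedMonomial_mem_wordSpan s w

lemma map_toGradedₗ_Wn_le (n : ℕ) : (Wn F (T → F) n).map (toGradedₗ s) ≤ Wn F T n :=
  map_toGradedₗ_wordSpan_le s (Multiset.range n)

variable {s}

lemma toGraded_embedMonomial_map_single [DecidableEq T] : ∀ w : FreeMagma (ℕ × T),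
    (∀ p ∈ mleaves w, p.2 ∈ s) →
      toGraded F s (embedMonomial F (T → F) (w.map fun p => (p.1, Pi.single p.2 1)))
        = embedMonomial F T w
  | .of a, h => by
      have ha : a.2 ∈ s := h a (Multiset.mem_singleton_self a)
      simp [FreeMagma.map_of, toGraded_of, Pi.single_apply, ite_smul, ha]
  | .mul x y, h => by
      rw [FreeMagma.mul_eq, map_mul, map_mul, map_mul, map_mul,
        toGraded_embedMonomial_map_single x fun p hp => h p (Multiset.mem_add.mpr (.inl hp)),
        toGraded_embedMonomial_map_single y fun p hp => h p (Multiset.mem_add.mpr (.inr hp))]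

end Comparison

section Identities

variable {T A : Type} [NonUnitalNonAssocSemiring A] [Module F A] [SMulCommClass F A A]
  [IsScalarTower F A A] {comp : T → Submodule F A}

lemma mem_IdGr {x : FreeNA F T} :
    x ∈ IdGr F A T comp ↔ ∀ ψ : ℕ × T → A, (∀ p, ψ p ∈ comp p.2) → lift F ψ x = 0 := by
  simp [IdGr, LinearMap.mem_ker]

lemma mem_IdH {H : Type} [Semiring H] [Module H A] {x : FreeNA F H} :
    x ∈ IdH F A H ↔ ∀ ψ : ℕ → A, lift F (fun p : ℕ × H => p.2 • ψ p.1) x = 0 := by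
  simp [IdH, LinearMap.mem_ker]

lemma embedMonomial_mem_IdGr {w : FreeMagma (ℕ × T)} {p : ℕ × T} (hp : p ∈ mleaves w)
    (hbot : comp p.2 = ⊥) : embedMonomial F T w ∈ IdGr F A T comp := by
  refine mem_IdGr.mpr fun ψ hψ => ?_
  refine map_eq_zero_of_mem_mleaves ((lift F ψ).toMulHom.comp (embedMonomial F T)) ?_ hp
  show lift F ψ (of F p) = 0
  rw [lift_of_apply, ← Submodule.mem_bot F, ← hbot]
  exact hψ p

lemma map_relabelL_IdGr_le (g : ℕ → ℕ) :
    (IdGr F A T comp).map (relabelL F T g) ≤ IdGr F A T comp := by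
  rintro _ ⟨x, hx, rfl⟩
  refine mem_IdGr.mpr fun ψ hψ => ?_
  have hcomp : (lift F ψ).comp (relabelHom F T g) = lift F fun p => ψ (g p.1, p.2) :=
    hom_ext F fun ⟨i, t⟩ => by simp [relabelHom]
  rw [relabelL_apply, ← NonUnitalAlgHom.comp_apply, hcomp]
  exact mem_IdGr.mp hx _ fun p => hψ (g p.1, p.2)

variable {s : Finset T}

lemma wordSpan_le_map_toGradedₗ_sup_IdGr (hs : ∀ t ∉ s, comp t = ⊥) (m : Multiset ℕ) :
    wordSpan F T m ≤ (wordSpan F (T → F) m).map (toGradedₗ s) ⊔ IdGr F A T comp := by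
  classical
  rw [wordSpan, span_le]
  rintro _ ⟨w, rfl, rfl⟩
  by_cases hw : ∀ p ∈ mleaves w, p.2 ∈ s
  · refine mem_sup_left ⟨_, subset_span ⟨_, ?_, rfl⟩, toGraded_embedMonomial_map_single w hw⟩
    rw [mleaves_map, Multiset.map_map]
    rfl
  · push Not at hw
    obtain ⟨p, hp, hps⟩ := hw
    exact mem_sup_right (embedMonomial_mem_IdGr hp (hs _ hps))

lemma map_toGradedₗ_Wn_sup_IdGr (hs : ∀ t ∉ s, comp t = ⊥) (n : ℕ) :
    (Wn F (T → F) n).map (toGradedₗ s) ⊔ IdGr F A T comp = Wn F T n ⊔ IdGr F A T comp :=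
  le_antisymm (sup_le_sup_right (map_toGradedₗ_Wn_le s n) _)
    (sup_le (wordSpan_le_map_toGradedₗ_sup_IdGr hs (Multiset.range n)) le_sup_right)

variable [Module (T → F) A]

lemma lift_comp_toGraded (hact : ∀ (h : T → F) (t : T), ∀ a ∈ comp t, h • a = h t • a)
    {ψ : ℕ × T → A} (hψ : ∀ p, ψ p ∈ comp p.2) :
    (lift F ψ).comp (toGraded F s) =
      lift F fun p : ℕ × (T → F) => p.2 • ∑ t ∈ s, ψ (p.1, t) := by
  refine hom_ext F fun ⟨i, h⟩ => ?_
  simp only [NonUnitalAlgHom.comp_apply, toGraded_of, map_sum, map_smul,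
    lift_of_apply, Finset.smul_sum, hact h _ _ (hψ _)]

lemma IdH_eq_comap_toGradedₗ (hact : ∀ (h : T → F) (t : T), ∀ a ∈ comp t, h • a = h t • a)
    (htotal : (⨆ t, comp t) = ⊤) (hs : ∀ t ∉ s, comp t = ⊥) :
    IdH F A (T → F) = (IdGr F A T comp).comap (toGradedₗ s) := by
  ext x
  rw [Submodule.mem_comap, mem_IdH, mem_IdGr]
  constructor
  · intro hx ψ hψ
    rw [LinearMap.coe_coe, ← NonUnitalAlgHom.comp_apply, lift_comp_toGraded hact hψ]
    exact hx fun i => ∑ t ∈ s, ψ (i, t)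
  · intro hx ψ
    choose c hc hsum using fun i => Submodule.exists_sum_eq_of_iSup_eq_top htotal hs (ψ i)
    obtain rfl : ψ = fun i => ∑ t ∈ s, c i t := funext fun i => (hsum i).symm
    have hc' : ∀ p : ℕ × T, c p.1 p.2 ∈ comp p.2 := fun p => hc p.1 p.2
    have := hx (fun p => c p.1 p.2) hc'
    rwa [LinearMap.coe_coe, ← NonUnitalAlgHom.comp_apply, lift_comp_toGraded hact hc'] at this

end Identities

end PIExp

theorem graded_invariants_eq_generalized_action_invariants_general
    (F T A : Type) [Field F]
    [NonUnitalNonAssocRing A] [Module F A] [SMulCommClass F A A] [IsScalarTower F A A]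
    [Module (T → F) A]
    (comp : T → Submodule F A)
    (htotal : (⨆ t, comp t) = ⊤)
    (hsupp : {t : T | comp t ≠ ⊥}.Finite)
    (hact : ∀ (h : T → F) (t : T), ∀ a ∈ comp t, h • a = h t • a) (n : ℕ) :
    PIExp.codim F T (PIExp.IdGr F A T comp) n =
      PIExp.codim F (T → F) (PIExp.IdH F A (T → F)) n ∧
    (∃ ξ : PIExp.FreeNA F (T → F) →ₗ[F] PIExp.FreeNA F T,
      (∀ g : ℕ → ℕ, PIExp.relabelL F T g ∘ₗ ξ = ξ ∘ₗ PIExp.relabelL F (T → F) g) ∧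
      (PIExp.Wn F (T → F) n).map ξ ≤ PIExp.Wn F T n ∧
      (∀ f ∈ PIExp.Wn F (T → F) n,
        (f ∈ PIExp.IdH F A (T → F) ↔ ξ f ∈ PIExp.IdGr F A T comp)) ∧
      (∀ g ∈ PIExp.Wn F T n,
        ∃ f ∈ PIExp.Wn F (T → F) n, g - ξ f ∈ PIExp.IdGr F A T comp)) ∧
    (CharZero F →
      PIExp.colength F T (PIExp.IdGr F A T comp) n =
        PIExp.colength F (T → F) (PIExp.IdH F A (T → F)) n) := by
  open PIExp Submodule in
  set s := hsupp.toFinset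
  have hs : ∀ t ∉ s, comp t = ⊥ := fun t ht => not_not.mp (mt hsupp.mem_toFinset.mpr ht)
  have hId := IdH_eq_comap_toGradedₗ hact htotal hs
  have hW := map_toGradedₗ_Wn_sup_IdGr (A := A) hs n
  refine ⟨(finrank_map_mkQ_eq_of_map_sup_eq _ hId hW).symm,
    ⟨toGradedₗ s, relabelL_comp_toGradedₗ s, map_toGradedₗ_Wn_le s n,
      fun f _ => by rw [hId, Submodule.mem_comap], fun g hg => ?_⟩, fun _ => ?_⟩
  · obtain ⟨_, ⟨f, hf, rfl⟩, z, hz, hfz⟩ := mem_sup.mp (hW ▸ mem_sup_left hg)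
    exact ⟨f, hf, by rwa [← hfz, add_sub_cancel_left]⟩
  · refine Finset.sum_congr rfl fun p _ => (finrank_map_mkQ_eq_of_map_sup_eq _ hId ?_).symm
    exact map_sup_eq_of_comp_eq _ hW
      (youngE_comp_of_forall_relabelL_comp _ (relabelL_comp_toGradedₗ s) _).symm
      (map_youngE_le_of_forall_map_relabelL_le map_relabelL_IdGr_le _)

/-- **Lemma (graded codimensions, cocharacters and colengths coincide with the `F^T` ones).**
For a grading with finite support, regarded as a generalized `F^T`-action:
`c_n^{T-gr}(A) = c_n^{F^T}(A)`; the `FS_n`-modules `W_n^{T-gr}/(W_n^{T-gr} ∩ Id^{T-gr}(A))` and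
`W_n^{F^T}/(W_n^{F^T} ∩ Id^{F^T}(A))` are isomorphic (expressed by an `S_n`-equivariant linear
map `ξ` mapping `W_n` into `W_n`, pulling back identities to identities, and surjective modulo
identities); and if `char F = 0` then `ℓ_n^{T-gr}(A) = ℓ_n^{F^T}(A)`. -/
theorem graded_invariants_eq_generalized_action_invariants
    (F T A : Type) [Field F] [DecidableEq T]
    [NonUnitalNonAssocRing A] [Module F A] [SMulCommClass F A A] [IsScalarTower F A A]
    [Module (T → F) A]
    (comp : T → Submodule F A)
    (hindep : iSupIndep comp) (htotal : (⨆ t, comp t) = ⊤)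
    (hmul : ∀ s t : T, ∃ r : T, ∀ a ∈ comp s, ∀ b ∈ comp t, a * b ∈ comp r)
    (hsupp : {t : T | comp t ≠ ⊥}.Finite)
    (hact : ∀ (h : T → F) (t : T), ∀ a ∈ comp t, h • a = h t • a) (n : ℕ) :
    PIExp.codim F T (PIExp.IdGr F A T comp) n =
      PIExp.codim F (T → F) (PIExp.IdH F A (T → F)) n ∧
    (∃ ξ : PIExp.FreeNA F (T → F) →ₗ[F] PIExp.FreeNA F T,
      (∀ g : ℕ → ℕ, PIExp.relabelL F T g ∘ₗ ξ = ξ ∘ₗ PIExp.relabelL F (T → F) g) ∧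
      (PIExp.Wn F (T → F) n).map ξ ≤ PIExp.Wn F T n ∧
      (∀ f ∈ PIExp.Wn F (T → F) n,
        (f ∈ PIExp.IdH F A (T → F) ↔ ξ f ∈ PIExp.IdGr F A T comp)) ∧
      (∀ g ∈ PIExp.Wn F T n,
        ∃ f ∈ PIExp.Wn F (T → F) n, g - ξ f ∈ PIExp.IdGr F A T comp)) ∧
    (CharZero F →
      PIExp.colength F T (PIExp.IdGr F A T comp) n =
        PIExp.colength F (T → F) (PIExp.IdH F A (T → F)) n) :=
  graded_invariants_eq_generalized_action_invariants_general F T A comp htotal hsupp hact n
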